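/- arXiv:1501.06394 — 2 statements merged into one kernel-verified Lean document; each statement's English description precedes it below -/
import Mathlib

section
/- Let G be a finite group and let n be a positive integer. Then the length of the Brandt semigroup B(G,n) satisfies l(B(G,n)) = n(l(G) + 2) + (n(n−1)/2)·|G| − 1. -/
/-- The length of a semigroup `M` (stated for any multiplicative structure): the largest
number of non-empty subsemigroups of `M` in a chain, minus 1; equivalently the largest
`k` for which there is a strictly increasing chain of `k + 1` non-empty subsemigroups. -/
noncomputable def semigroupLength (M : Type*) [Mul M] : ℕ :=
  sSup {k : ℕ | ∃ c : Fin (k + 1) → Subsemigroup M,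
    StrictMono c ∧ ∀ i, ((c i : Set M)).Nonempty}

/-- The length of a finite group `G`: the largest `k` such that there is a strictly
increasing chain of subgroups `G₀ < G₁ < ⋯ < G_k` of `G`. -/
noncomputable def groupLength (G : Type*) [Group G] : ℕ :=
  sSup {k : ℕ | ∃ c : Fin (k + 1) → Subgroup G, StrictMono c}

/-- The Brandt semigroup `B(G,n)`: elements `({1,…,n} × G × {1,…,n}) ∪ {0}`, with the
zero represented by `none`. -/
def Brandt (G : Type*) (n : ℕ) : Type _ :=
  Option (Fin n × G × Fin n)

/-- Multiplication in the Brandt semigroup: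
`(i,g,j)(k,h,l) = (i,gh,l)` if `j = k` and `0` otherwise; `0` is absorbing. -/
instance {G : Type*} [Mul G] {n : ℕ} : Mul (Brandt G n) :=
  ⟨fun a b =>
    match a, b with
    | some (i, g, j), some (k, h, l) =>
        if j = k then (some (i, g * h, l) : Brandt G n) else (none : Brandt G n)
    | _, _ => (none : Brandt G n)⟩

/-!
For a subsemigroup `S` of `B(G,n)` write `S_ij = {g | (i, g, j) ∈ S}`; a nonempty diagonal block
`S_ii` is a subgroup because `G` is finite. The length of `B(G,n)` is `height ⊤ - 1` in the
lattice of all subsemigroups (the empty one included).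

Upper bound: the weight
`[0 ∈ S] + ∑ᵢ height S_ii + (n - #classes) + ∑_{i<j} max |S_ij| |S_ji|`,
where the classes are those of "`i = j` or `S_ij`, `S_ji` both nonempty", is strictly monotone.
Indeed a new element `(i, g, j)` enlarges a diagonal block, merges two classes, or (if `S_ji`
stays empty) enlarges `S_ij`; if `a ∈ S_ij` and `b ∈ S_ji` already existed, then `b g` is new in
`S_jj`. The weight is at most `1 + n (l(G) + 1) + (n - 1) + (n(n-1)/2) |G|`.

Lower bound: starting from `{0}`, fill the rows one at a time. Row `r` receives the idempotent
`(r, 1, r)`, then the `(n - 1 - r) |G|` entries right of the diagonal one by one, then a longest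
chain of subgroups on the diagonal, and finally (for `r > 0`) all entries left of the diagonal at
once.
-/

open Order

section Height

variable {α β : Type*}

lemma LTSeries.height_head_add_length_le [Preorder α] (p : LTSeries α) :
    height p.head + p.length ≤ height p.last := by
  have key : ∀ i : Fin (p.length + 1), height p.head + (i : ℕ) ≤ height (p i) := by
    intro i
    induction i using Fin.induction with
    | zero => simp [RelSeries.head]
    | succ i ih =>
      calc height p.head + ((i.succ : ℕ) : ℕ∞) = height p.head + (i : ℕ) + 1 := by
            simp [add_assoc]
        _ ≤ height (p i.castSucc) + 1 := by gcongr; simpa using ih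
        _ ≤ height (p i.succ) := height_add_one_le (p.step i)
  exact key (Fin.last _)

lemma height_apply_bot_add_le [PartialOrder α] [OrderBot α] [Preorder β] {f : α → β}
    (hf : StrictMono f) {a : α} {m : ℕ} (hm : (m : ℕ∞) ≤ height a) :
    height (f ⊥) + m ≤ height (f a) := by
  obtain ⟨p, rfl, rfl⟩ := exists_series_of_le_height a hm
  calc height (f ⊥) + p.length ≤ height (p.map f hf).head + (p.map f hf).length := by
        gcongr
        · exact hf.monotone bot_le
        · rfl
    _ ≤ height (f p.last) := (p.map f hf).height_head_add_length_le

lemma height_apply_empty_add_card_le [Preorder α] {ι : Type*} [DecidableEq ι]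
    {f : Finset ι → α} {u : Finset ι} (hf : StrictMonoOn f {s | s ⊆ u}) :
    height (f ∅) + u.card ≤ height (f u) := by
  refine Finset.induction_on' u (by simp) fun {a s} ha hs has ih => ?_
  have hlt : f s < f (insert a s) :=
    hf hs (Finset.insert_subset ha hs) (Finset.ssubset_insert has)
  calc height (f ∅) + ((insert a s).card : ℕ∞) = height (f ∅) + s.card + 1 := by
        rw [Finset.card_insert_of_notMem has]; push_cast; ring
    _ ≤ height (f s) + 1 := by gcongr
    _ ≤ height (f (insert a s)) := height_add_one_le hlt

lemma height_lt_top_of_finite [Preorder α] [Finite α] (a : α) : height a < ⊤ := by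
  have := Fintype.ofFinite α
  refine lt_of_le_of_lt (height_le fun p _ => ?_) (ENat.natCast_lt_top (Fintype.card α))
  exact_mod_cast p.length_lt_card.le

lemma strictMono_toNat_height [PartialOrder α] [Finite α] :
    StrictMono fun a : α => (height a).toNat := by
  intro a b hab
  have h := height_strictMono hab (height_lt_top_of_finite a)
  rwa [← ENat.natCast_toNat (height_lt_top_of_finite a).ne,
    ← ENat.natCast_toNat (height_lt_top_of_finite b).ne, Nat.cast_lt] at h

end Height

section ChainLength

variable {α : Type*} [PartialOrder α]

lemma exists_strictMono_iff_le_height_top [OrderTop α] (k : ℕ) :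
    (∃ c : Fin (k + 1) → α, StrictMono c) ↔ (k : ℕ∞) ≤ height (⊤ : α) := by
  constructor
  · rintro ⟨c, hc⟩
    exact length_le_height (p := LTSeries.mk k c hc) le_top
  · intro h
    obtain ⟨p, -, rfl⟩ := exists_series_of_le_height (⊤ : α) h
    exact ⟨p, p.strictMono⟩

lemma exists_strictMono_bot_lt_iff_add_one_le_height_top [OrderBot α] [OrderTop α] (k : ℕ) :
    (∃ c : Fin (k + 1) → α, StrictMono c ∧ ∀ i, ⊥ < c i) ↔ (k : ℕ∞) + 1 ≤ height (⊤ : α) := by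
  constructor
  · rintro ⟨c, hc, hbot⟩
    let p := LTSeries.mk k c hc
    calc (k : ℕ∞) + 1 ≤ height p.head + p.length := by
          rw [add_comm]
          gcongr
          · have h0 := height_add_one_le (hbot 0)
            rw [height_bot, zero_add] at h0
            exact h0
          · rfl
      _ ≤ height (⊤ : α) := p.height_head_add_length_le.trans (height_mono le_top)
  · intro h
    obtain ⟨p, -, hp⟩ := exists_series_of_le_height (⊤ : α) (n := k + 1) (by exact_mod_cast h)
    refine ⟨fun i => p (Fin.cast (by omega) i.succ), fun i j hij => ?_, fun i => ?_⟩
    · exact p.strictMono (Fin.lt_def.2 (Nat.succ_lt_succ hij))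
    · exact bot_le.trans_lt (p.strictMono (a := 0) (Fin.lt_def.2 (Nat.succ_pos i)))

lemma sSup_setOf_natCast_le {m : ℕ} : sSup {k : ℕ | (k : ℕ∞) ≤ m} = m := by
  simp_rw [Nat.cast_le]
  exact csSup_Iic

end ChainLength

lemma groupLength_eq_height_top (G : Type*) [Group G] [Finite G] :
    groupLength G = height (⊤ : Subgroup G) := by
  have := Finite.of_injective (fun H : Subgroup G => (H : Set G)) SetLike.coe_injective
  lift height (⊤ : Subgroup G) to ℕ using (height_lt_top_of_finite _).ne with m hm
  simp_rw [groupLength, exists_strictMono_iff_le_height_top, ← hm, sSup_setOf_natCast_le]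

lemma semigroupLength_eq_of_height_top (M : Type*) [Mul M] {m : ℕ}
    (h : height (⊤ : Subsemigroup M) = m + 1) : semigroupLength M = m := by
  have hbot : ∀ S : Subsemigroup M, (S : Set M).Nonempty ↔ ⊥ < S := fun S => by
    rw [bot_lt_iff_ne_bot, Ne, ← SetLike.coe_set_eq, Subsemigroup.coe_bot,
      Set.nonempty_iff_ne_empty]
  simp_rw [semigroupLength, hbot, exists_strictMono_bot_lt_iff_add_one_le_height_top, h]
  norm_cast
  simp_rw [Nat.add_le_add_iff_right]
  exact csSup_Iic

namespace Subsemigroup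

lemma pow_succ_mem {M : Type*} [Monoid M] (S : Subsemigroup M) {x : M} (hx : x ∈ S) (k : ℕ) :
    x ^ (k + 1) ∈ S := by
  induction k with
  | zero => simpa using hx
  | succ k ih => simpa [pow_succ] using S.mul_mem ih hx

variable {G : Type*} [Group G] [Finite G]

lemma one_mem_of_mem (S : Subsemigroup G) {x : G} (hx : x ∈ S) : (1 : G) ∈ S := by
  simpa [Nat.sub_add_cancel (orderOf_pos x)] using S.pow_succ_mem hx (orderOf x - 1)

lemma inv_mem_of_mem (S : Subsemigroup G) {x : G} (hx : x ∈ S) : x⁻¹ ∈ S := by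
  have h : x ^ (2 * orderOf x - 2 + 1) * x = 1 := by
    rw [← pow_succ, show 2 * orderOf x - 2 + 1 + 1 = orderOf x * 2 by have := orderOf_pos x; omega,
      pow_mul, pow_orderOf_eq_one, one_pow]
  rw [← eq_inv_of_mul_eq_one_left h]
  exact S.pow_succ_mem hx _

def toSubgroup (S : Subsemigroup G) (hS : (S : Set G).Nonempty) : Subgroup G where
  toSubsemigroup := S
  one_mem' := S.one_mem_of_mem hS.some_mem
  inv_mem' := S.inv_mem_of_mem

open Classical in
lemma height_le_groupLength_add_one (S : Subsemigroup G) : height S ≤ groupLength G + 1 := by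
  let f : Subsemigroup G → WithBot (Subgroup G) := fun T =>
    if hT : (T : Set G).Nonempty then (T.toSubgroup hT : Subgroup G) else ⊥
  have hf : StrictMono f := by
    intro T U hTU
    obtain ⟨x, hxU, -⟩ := SetLike.exists_of_lt hTU
    have hU : (U : Set G).Nonempty := ⟨x, hxU⟩
    by_cases hT : (T : Set G).Nonempty
    · simp only [f, dif_pos hT, dif_pos hU]
      exact WithBot.coe_lt_coe.2 (SetLike.coe_ssubset_coe.1 (SetLike.coe_ssubset_coe.2 hTU))
    · simp only [f, dif_neg hT, dif_pos hU]
      exact WithBot.bot_lt_coe _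
  calc height S ≤ height (f S) := height_le_height_apply_of_strictMono f hf S
    _ ≤ height ((⊤ : Subgroup G) : WithBot (Subgroup G)) := by
        apply height_mono
        simp only [f]
        split_ifs
        · exact WithBot.coe_le_coe.2 le_top
        · exact bot_le
    _ = groupLength G + 1 := by rw [height_coe_withBot, groupLength_eq_height_top]

end Subsemigroup

namespace Setoid

variable {α : Type*} [Finite α] {s t : Setoid α}

lemma card_quotient_le (s : Setoid α) : Nat.card (Quotient s) ≤ Nat.card α :=
  Nat.card_le_card_of_surjective _ Quotient.mk_surjective

lemma card_quotient_le_of_le (h : s ≤ t) : Nat.card (Quotient t) ≤ Nat.card (Quotient s) :=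
  Nat.card_le_card_of_surjective (map_of_le h) fun y => y.inductionOn fun a => ⟨⟦a⟧, rfl⟩

lemma card_quotient_lt_of_lt (h : s < t) : Nat.card (Quotient t) < Nat.card (Quotient s) := by
  have := Fintype.ofFinite (Quotient s)
  have := Fintype.ofFinite (Quotient t)
  simp only [Nat.card_eq_fintype_card]
  refine Fintype.card_lt_of_surjective_not_injective (map_of_le h.le)
    (fun y => y.inductionOn fun a => ⟨⟦a⟧, rfl⟩) fun hinj => h.not_ge ?_
  intro a b hab
  exact Quotient.exact (hinj (Quotient.sound hab : (⟦a⟧ : Quotient t) = ⟦b⟧))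

end Setoid

namespace Brandt

variable {G : Type*} {n : ℕ}

def mk (i : Fin n) (g : G) (j : Fin n) : Brandt G n := some (i, g, j)

instance : Zero (Brandt G n) := ⟨none⟩

lemma mk_mul_mk [Mul G] (i j k l : Fin n) (g h : G) :
    mk i g j * mk k h l = if j = k then mk i (g * h) l else 0 := rfl

lemma mk_mul_mk_self [Mul G] (i j k : Fin n) (g h : G) : mk i g j * mk j h k = mk i (g * h) k :=
  (mk_mul_mk ..).trans (if_pos rfl)

variable [Group G]

def block (S : Subsemigroup (Brandt G n)) (i j : Fin n) : Set G :=
  {g | mk i g j ∈ S}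

variable {S T : Subsemigroup (Brandt G n)}

lemma mul_mem_block {i j k : Fin n} {g h : G} (hg : g ∈ block S i j) (hh : h ∈ block S j k) :
    g * h ∈ block S i k := by
  have := S.mul_mem hg hh
  rwa [mk_mul_mk_self] at this

lemma block_mono (hST : S ≤ T) (i j : Fin n) : block S i j ⊆ block T i j := fun _ hg => hST hg

def diagonal (S : Subsemigroup (Brandt G n)) (i : Fin n) : Subsemigroup G where
  carrier := block S i i
  mul_mem' := mul_mem_block

lemma diagonal_mono (hST : S ≤ T) (i : Fin n) : diagonal S i ≤ diagonal T i :=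
  block_mono hST i i

def linked (S : Subsemigroup (Brandt G n)) : Setoid (Fin n) where
  r i j := i = j ∨ (block S i j).Nonempty ∧ (block S j i).Nonempty
  iseqv := by
    refine ⟨fun _ => Or.inl rfl, fun h => h.imp Eq.symm And.symm, ?_⟩
    rintro i j k (rfl | ⟨⟨a, ha⟩, ⟨b, hb⟩⟩) (rfl | ⟨⟨c, hc⟩, ⟨d, hd⟩⟩)
    exacts [Or.inl rfl, Or.inr ⟨⟨c, hc⟩, ⟨d, hd⟩⟩, Or.inr ⟨⟨a, ha⟩, ⟨b, hb⟩⟩,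
      Or.inr ⟨⟨a * c, mul_mem_block ha hc⟩, ⟨d * b, mul_mem_block hd hb⟩⟩]

lemma linked_mono (hST : S ≤ T) : linked S ≤ linked T :=
  Setoid.le_def.2 fun h => h.imp_right fun h => ⟨h.1.mono (block_mono hST _ _),
    h.2.mono (block_mono hST _ _)⟩

noncomputable def pairSize (S : Subsemigroup (Brandt G n)) (i j : Fin n) : ℕ :=
  max (block S i j).ncard (block S j i).ncard

lemma pairSize_comm (S : Subsemigroup (Brandt G n)) (i j : Fin n) :
    pairSize S i j = pairSize S j i :=
  max_comm _ _

lemma pairSize_mono [Finite G] (hST : S ≤ T) (i j : Fin n) : pairSize S i j ≤ pairSize T i j :=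
  max_le_max (Set.ncard_le_ncard (block_mono hST i j)) (Set.ncard_le_ncard (block_mono hST j i))

lemma zero_mem_or_diagonal_lt_or_linked_lt_or_pairSize_lt [Finite G] (hST : S < T) :
    ((0 : Brandt G n) ∉ S ∧ (0 : Brandt G n) ∈ T) ∨ (∃ i, diagonal S i < diagonal T i) ∨
      linked S < linked T ∨ ∃ i j, i < j ∧ pairSize S i j < pairSize T i j := by
  obtain ⟨x, hxT, hxS⟩ := SetLike.exists_of_lt hST
  rcases x with _ | ⟨i, g, j⟩
  · exact Or.inl ⟨hxS, hxT⟩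
  have diagonal_lt {k : Fin n} {h : G} (hT : h ∈ block T k k) (hS : h ∉ block S k k) :
      diagonal S k < diagonal T k :=
    SetLike.lt_iff_le_and_exists.2 ⟨diagonal_mono hST.le k, h, hT, hS⟩
  obtain rfl | hij := eq_or_ne i j
  · exact Or.inr (Or.inl ⟨i, diagonal_lt hxT hxS⟩)
  by_cases hTji : (block T j i).Nonempty
  · by_cases hS : (block S i j).Nonempty ∧ (block S j i).Nonempty
    · -- `b * g` is new in the diagonal block at `j`, since `g = a (b a)⁻¹ (b g)`
      obtain ⟨⟨a, ha⟩, ⟨b, hb⟩⟩ := hS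
      refine Or.inr (Or.inl ⟨j, diagonal_lt (mul_mem_block (block_mono hST.le _ _ hb) hxT)
        fun hbg => hxS ?_⟩)
      have hinv : (b * a)⁻¹ ∈ block S j j :=
        (diagonal S j).inv_mem_of_mem (x := b * a) (mul_mem_block hb ha)
      show g ∈ block S i j
      simpa [mul_assoc] using mul_mem_block (mul_mem_block ha hinv) hbg
    · refine Or.inr (Or.inr (Or.inl (lt_of_le_of_ne (linked_mono hST.le) fun e => ?_)))
      have hlinked : linked T i j := Or.inr ⟨⟨g, hxT⟩, hTji⟩
      rw [← e] at hlinked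
      exact hlinked.elim hij hS
  · have hSji : block S j i = ∅ :=
      Set.not_nonempty_iff_eq_empty.1 fun h => hTji (h.mono (block_mono hST.le j i))
    have hlt : pairSize S i j < pairSize T i j := by
      have : (block S i j).ncard < (block T i j).ncard :=
        Set.ncard_lt_ncard ⟨block_mono hST.le i j, fun h => hxS (h hxT)⟩
      simpa [pairSize, hSji, Set.not_nonempty_iff_eq_empty.1 hTji] using this
    rcases hij.lt_or_gt with h | h
    · exact Or.inr (Or.inr (Or.inr ⟨i, j, h, hlt⟩))
    · exact Or.inr (Or.inr (Or.inr ⟨j, i, h, by rwa [pairSize_comm, pairSize_comm T]⟩))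

section Weight

variable [Fintype G]

open Classical

noncomputable def weight (S : Subsemigroup (Brandt G n)) : ℕ :=
  (if (0 : Brandt G n) ∈ S then 1 else 0) + ∑ i, (height (diagonal S i)).toNat +
    (n - Nat.card (Quotient (linked S))) + ∑ j, ∑ i ∈ Finset.Iio j, pairSize S i j

lemma weight_strictMono : StrictMono (weight : Subsemigroup (Brandt G n) → ℕ) := by
  intro S T hST
  have hdiag i : (height (diagonal S i)).toNat ≤ (height (diagonal T i)).toNat :=
    strictMono_toNat_height.monotone (diagonal_mono hST.le i)
  have hpair j : ∑ i ∈ Finset.Iio j, pairSize S i j ≤ ∑ i ∈ Finset.Iio j, pairSize T i j :=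
    Finset.sum_le_sum fun i _ => pairSize_mono hST.le i j
  have hzero : (if (0 : Brandt G n) ∈ S then 1 else 0) ≤ if (0 : Brandt G n) ∈ T then 1 else 0 := by
    split_ifs with hS hT <;> first | omega | exact absurd (hST.le hS) hT
  have hcard : Nat.card (Quotient (linked S)) ≤ n := by
    simpa using (linked S).card_quotient_le
  have hlinked := Setoid.card_quotient_le_of_le (linked_mono hST.le)
  have hD := Finset.sum_le_sum fun i (_ : i ∈ Finset.univ) => hdiag i
  have hP := Finset.sum_le_sum fun j (_ : j ∈ Finset.univ) => hpair j
  unfold weight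
  rcases zero_mem_or_diagonal_lt_or_linked_lt_or_pairSize_lt hST with ⟨hS, hT⟩ | ⟨i, hi⟩ | hl | ⟨i, j, hij, hlt⟩
  · rw [if_neg hS, if_pos hT]
    omega
  · have := Finset.sum_lt_sum (fun i _ => hdiag i)
      ⟨i, Finset.mem_univ i, strictMono_toNat_height hi⟩
    omega
  · have := Setoid.card_quotient_lt_of_lt hl
    omega
  · have := Finset.sum_lt_sum (fun j _ => hpair j) ⟨j, Finset.mem_univ j,
      Finset.sum_lt_sum (fun i _ => pairSize_mono hST.le i j) ⟨i, Finset.mem_Iio.2 hij, hlt⟩⟩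
    omega

lemma weight_le (S : Subsemigroup (Brandt G n)) :
    weight S ≤ 1 + n * (groupLength G + 1) + (n - 1) + n * (n - 1) / 2 * Fintype.card G := by
  have hzero : (if (0 : Brandt G n) ∈ S then 1 else 0) ≤ 1 := by split_ifs <;> omega
  have hD : ∑ i, (height (diagonal S i)).toNat ≤ n * (groupLength G + 1) := by
    refine (Finset.sum_le_card_nsmul Finset.univ _ (groupLength G + 1) fun i _ => ?_).trans_eq
      (by simp)
    exact ENat.toNat_le_of_le_natCast (by exact_mod_cast (diagonal S i).height_le_groupLength_add_one)
  have hL : n - Nat.card (Quotient (linked S)) ≤ n - 1 := by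
    rcases n.eq_zero_or_pos with rfl | hn
    · simp
    · have : Nonempty (Quotient (linked S)) := ⟨⟦⟨0, hn⟩⟧⟩
      have := Nat.card_pos (α := Quotient (linked S))
      omega
  have hP : ∑ j : Fin n, ∑ i ∈ Finset.Iio j, pairSize S i j ≤ n * (n - 1) / 2 * Fintype.card G :=
    calc ∑ j : Fin n, ∑ i ∈ Finset.Iio j, pairSize S i j
        ≤ ∑ j : Fin n, (j : ℕ) * Fintype.card G := by
          refine Finset.sum_le_sum fun j _ => ?_
          refine (Finset.sum_le_card_nsmul _ _ (Fintype.card G) fun i _ => ?_).trans_eq (by simp)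
          rw [← Nat.card_eq_fintype_card]
          exact max_le (Set.ncard_le_card _) (Set.ncard_le_card _)
      _ = n * (n - 1) / 2 * Fintype.card G := by
          rw [← Finset.sum_mul, Fin.sum_univ_eq_sum_range (fun j => j), Finset.sum_range_id]
  unfold weight
  omega

lemma height_top_le :
    height (⊤ : Subsemigroup (Brandt G n)) ≤
      ((1 + n * (groupLength G + 1) + (n - 1) + n * (n - 1) / 2 * Fintype.card G : ℕ) : ℕ∞) :=
  (height_le_height_apply_of_strictMono _ weight_strictMono ⊤).trans
    (by rw [height_nat]; exact_mod_cast weight_le (G := G) (n := n) ⊤)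

end Weight

def ofBlocks (P : Fin n → Fin n → Set G)
    (hP : ∀ {i j k g h}, g ∈ P i j → h ∈ P j k → g * h ∈ P i k) : Subsemigroup (Brandt G n) where
  carrier := {x | match x with
    | none => True
    | some (i, g, j) => g ∈ P i j}
  mul_mem' := by
    rintro (_ | ⟨i, g, j⟩) (_ | ⟨k, h, l⟩) hx hy
    any_goals trivial
    change mk i g j * mk k h l ∈ _
    rw [mk_mul_mk]
    split_ifs with hjk
    · subst hjk
      exact hP hx hy
    · trivial

lemma zero_mem_ofBlocks {P : Fin n → Fin n → Set G} {hP} : (0 : Brandt G n) ∈ ofBlocks P hP :=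
  trivial

lemma le_of_forall_mk_mem (h0 : (0 : Brandt G n) ∈ T) (h : ∀ i g j, mk i g j ∈ S → mk i g j ∈ T) :
    S ≤ T := by
  rintro (_ | ⟨i, g, j⟩) hx
  exacts [h0, h i g j hx]

lemma lt_of_forall_mk_mem (h0 : (0 : Brandt G n) ∈ T) (h : ∀ i g j, mk i g j ∈ S → mk i g j ∈ T)
    {i j : Fin n} {g : G} (hT : mk i g j ∈ T) (hS : mk i g j ∉ S) : S < T :=
  SetLike.lt_iff_le_and_exists.2 ⟨le_of_forall_mk_mem h0 h, mk i g j, hT, hS⟩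

def rowsBelow (r : ℕ) : Subsemigroup (Brandt G n) :=
  ofBlocks (fun i _ => {_g | (i : ℕ) < r}) fun hg _ => hg

def rowStage (r : Fin n) (K : Subgroup G) (F : Set (Fin n × G))
    (hF : ∀ k ∈ K, ∀ p ∈ F, (p.1, k * p.2) ∈ F) : Subsemigroup (Brandt G n) :=
  ofBlocks (fun i j => {g | i < r ∨ i = r ∧ (j = r ∧ g ∈ K ∨ r < j ∧ (j, g) ∈ F)}) <| by
    rintro i j k g h (hi | ⟨rfl, ⟨rfl, hg⟩ | ⟨hij, -⟩⟩) hh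
    · exact Or.inl hi
    · rcases hh with hlt | ⟨-, ⟨rfl, hh⟩ | ⟨hik, hh⟩⟩
      · exact absurd hlt (lt_irrefl _)
      · exact Or.inr ⟨rfl, Or.inl ⟨rfl, K.mul_mem hg hh⟩⟩
      · exact Or.inr ⟨rfl, Or.inr ⟨hik, hF g hg _ hh⟩⟩
    · rcases hh with hji | ⟨rfl, -⟩
      exacts [absurd (hij.trans hji) (lt_irrefl _), absurd hij (lt_irrefl _)]

lemma bot_lt_rowsBelow_zero : ⊥ < (rowsBelow 0 : Subsemigroup (Brandt G n)) :=
  SetLike.lt_iff_le_and_exists.2 ⟨bot_le, 0, zero_mem_ofBlocks, Subsemigroup.notMem_bot⟩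

lemma rowsBelow_eq_top : (rowsBelow n : Subsemigroup (Brandt G n)) = ⊤ :=
  eq_top_iff.2 fun x _ => match x with
    | none => trivial
    | some (i, _, _) => i.isLt

lemma rowsBelow_lt_rowStage (r : Fin n) {F : Set (Fin n × G)} (hF) :
    rowsBelow r < rowStage r ⊥ F hF :=
  lt_of_forall_mk_mem zero_mem_ofBlocks (fun _ _ _ hi => Or.inl hi) (i := r) (j := r) (g := 1)
    (Or.inr ⟨rfl, Or.inl ⟨rfl, one_mem _⟩⟩) (lt_irrefl (r : ℕ))

lemma height_rowStage_add_le_rowsBelow_succ (r : Fin n) {F : Set (Fin n × G)} (hF) :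
    height (rowStage (G := G) r ⊤ F hF) + (if (r : ℕ) = 0 then 0 else 1 : ℕ) ≤
      height (rowsBelow (G := G) (n := n) (r + 1)) := by
  have hle : ∀ i g j, mk i g j ∈ rowStage r ⊤ F hF → mk i g j ∈ rowsBelow (r + 1) := by
    rintro i g j (hi | ⟨rfl, -⟩)
    exacts [Nat.lt_succ_of_lt hi, Nat.lt_succ_self _]
  split_ifs with hr
  · rw [Nat.cast_zero, add_zero]
    exact height_mono (le_of_forall_mk_mem zero_mem_ofBlocks hle)
  · refine Nat.cast_one (R := ℕ∞) ▸ height_add_one_le (lt_of_forall_mk_mem zero_mem_ofBlocks hle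
      (i := r) (j := ⟨0, r.pos⟩) (g := 1) (Nat.lt_succ_self _) ?_)
    rintro (h | ⟨-, ⟨h, -⟩ | ⟨h, -⟩⟩)
    · exact lt_irrefl _ h
    · exact hr (congrArg Fin.val h).symm
    · exact Nat.not_lt_zero _ h

section Chain

variable [Fintype G]

lemma height_rowStage_add_card_le (r : Fin n) :
    height (rowStage (G := G) r ⊥ ∅ (by simp)) + ((n - 1 - r) * Fintype.card G : ℕ) ≤
      height (rowStage (G := G) r ⊥ {p | r < p.1} fun _ _ _ hp => hp) := by
  classical
  let forward : Finset (Fin n × G) := Finset.univ.filter fun p => r < p.1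
  have hcard : forward.card = (n - 1 - r) * Fintype.card G := by
    simp only [forward]
    rw [← Finset.univ_product_univ, Finset.filter_product_left, Finset.card_product,
      Finset.filter_lt_eq_Ioi, Fin.card_Ioi, Finset.card_univ]
  let f (s : Finset (Fin n × G)) : Subsemigroup (Brandt G n) :=
    rowStage r ⊥ s fun k hk p hp => by rw [Subgroup.mem_bot.1 hk, one_mul]; exact hp
  have hf : StrictMonoOn f {s | s ⊆ forward} := by
    intro s _ t ht hst
    obtain ⟨p, hpt, hps⟩ := Finset.exists_of_ssubset hst
    have hrp : r < p.1 := (Finset.mem_filter.1 (ht hpt)).2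
    refine lt_of_forall_mk_mem zero_mem_ofBlocks ?_ (i := r) (j := p.1) (g := p.2)
      (Or.inr ⟨rfl, Or.inr ⟨hrp, hpt⟩⟩) ?_
    · rintro i g j (hi | ⟨hi, hK | ⟨hj, hF⟩⟩)
      exacts [Or.inl hi, Or.inr ⟨hi, Or.inl hK⟩, Or.inr ⟨hi, Or.inr ⟨hj, hst.le hF⟩⟩]
    · rintro (h | ⟨-, ⟨h, -⟩ | ⟨-, h⟩⟩)
      exacts [lt_irrefl _ h, hrp.ne' h, hps h]
  have := height_apply_empty_add_card_le hf
  rw [hcard] at this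
  convert this using 3 <;> simp [f, forward]

lemma height_rowStage_add_groupLength_le (r : Fin n) :
    height (rowStage (G := G) r ⊥ {p | r < p.1} fun _ _ _ hp => hp) + groupLength G ≤
      height (rowStage (G := G) r ⊤ {p | r < p.1} fun _ _ _ hp => hp) := by
  refine height_apply_bot_add_le (f := fun K => rowStage r K {p | r < p.1} fun _ _ _ hp => hp)
    (fun K L hKL => ?_) (groupLength_eq_height_top G).le
  obtain ⟨g, hgL, hgK⟩ := SetLike.exists_of_lt hKL
  refine lt_of_forall_mk_mem zero_mem_ofBlocks ?_ (i := r) (j := r) (g := g)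
    (Or.inr ⟨rfl, Or.inl ⟨rfl, hgL⟩⟩) ?_
  · rintro i g j (hi | ⟨hi, ⟨hj, hK⟩ | hF⟩)
    exacts [Or.inl hi, Or.inr ⟨hi, Or.inl ⟨hj, hKL.le hK⟩⟩, Or.inr ⟨hi, Or.inr hF⟩]
  · rintro (h | ⟨-, ⟨-, h⟩ | ⟨h, -⟩⟩)
    exacts [lt_irrefl _ h, hgK h, lt_irrefl _ h]

variable (G n) in
noncomputable def rowLength (r : ℕ) : ℕ :=
  1 + (n - 1 - r) * Fintype.card G + groupLength G + if r = 0 then 0 else 1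

lemma height_rowsBelow_add_le_succ (r : Fin n) :
    height (rowsBelow (G := G) (n := n) r) + rowLength G n r ≤
      height (rowsBelow (G := G) (n := n) (r + 1)) := by
  have h1 := height_add_one_le (rowsBelow_lt_rowStage (G := G) r (F := ∅) (by simp))
  have h2 := height_rowStage_add_card_le (G := G) r
  have h3 := height_rowStage_add_groupLength_le (G := G) r
  have h4 := height_rowStage_add_le_rowsBelow_succ (G := G) r (F := {p | r < p.1})
    fun _ _ _ hp => hp
  refine le_trans ?_ h4
  refine le_trans ?_ (add_le_add_left h3 _)
  refine le_trans ?_ (add_le_add_left (add_le_add_left h2 _) _)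
  refine le_trans (le_of_eq ?_) (add_le_add_left (add_le_add_left (add_le_add_left h1 _) _) _)
  simp only [rowLength]
  push_cast
  ring

lemma le_height_rowsBelow {m : ℕ} (hm : m ≤ n) :
    ((1 + ∑ r ∈ Finset.range m, rowLength G n r : ℕ) : ℕ∞) ≤
      height (rowsBelow (G := G) (n := n) m) := by
  induction m with
  | zero => simpa using height_add_one_le (bot_lt_rowsBelow_zero (G := G) (n := n))
  | succ m ih =>
    rw [Finset.sum_range_succ, ← add_assoc, Nat.cast_add]
    exact (add_le_add_left (ih (by omega)) _).trans (height_rowsBelow_add_le_succ ⟨m, hm⟩)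

lemma sum_range_rowLength :
    ∑ r ∈ Finset.range n, rowLength G n r =
      n * (groupLength G + 1) + (n - 1) + n * (n - 1) / 2 * Fintype.card G := by
  have hreflect : ∑ r ∈ Finset.range n, (n - 1 - r) = n * (n - 1) / 2 := by
    rw [Finset.sum_range_reflect (fun r => r) n, Finset.sum_range_id]
  have hcount : ∑ r ∈ Finset.range n, (if r = 0 then 0 else 1) = n - 1 := by
    cases n with
    | zero => simp
    | succ n => simp [Finset.sum_range_succ']
  simp only [rowLength, Finset.sum_add_distrib, Finset.sum_const, Finset.card_range, smul_eq_mul,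
    ← Finset.sum_mul, hreflect, hcount]
  ring

lemma height_top_eq :
    height (⊤ : Subsemigroup (Brandt G n)) =
      ((1 + n * (groupLength G + 1) + (n - 1) + n * (n - 1) / 2 * Fintype.card G : ℕ) : ℕ∞) := by
  refine le_antisymm height_top_le ?_
  have := le_height_rowsBelow (G := G) (le_refl n)
  rwa [sum_range_rowLength, rowsBelow_eq_top, ← add_assoc, ← add_assoc] at this

end Chain

end Brandt

theorem semigroupLength_brandt_general (G : Type*) [Group G] [Fintype G] (n : ℕ) :
    semigroupLength (Brandt G n) =
      n * (groupLength G + 2) + n * (n - 1) / 2 * Fintype.card G - 1 := by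
  apply semigroupLength_eq_of_height_top
  rw [Brandt.height_top_eq]
  rcases Nat.eq_zero_or_pos n with rfl | hn
  · simp
  rw [show n * (groupLength G + 2) = n * (groupLength G + 1) + n by ring]
  generalize n * (groupLength G + 1) = A, n * (n - 1) / 2 * Fintype.card G = C
  exact_mod_cast (by omega : 1 + A + (n - 1) + C = A + n + C - 1 + 1)

/-- Let `G` be a finite group and `n` a positive integer.  Then the length of the Brandt
semigroup `B(G,n)` satisfies `l(B(G,n)) = n(l(G) + 2) + (n(n−1)/2)·|G| − 1`. -/
theorem semigroupLength_brandt (G : Type*) [Group G] [Fintype G] (n : ℕ) (hn : 0 < n) :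
    semigroupLength (Brandt G n) =
      n * (groupLength G + 2) + n * (n - 1) / 2 * Fintype.card G - 1 :=
  semigroupLength_brandt_general G n
end

section
/- Let c = e^{−2} / (3·√3·√(e^{−1} − 2e^{−2})). Then: (a) liminf_{n→∞} log₂(N(n)) / n^{n−1/2} ≥ c, where N(n) is the number of subsemigroups of the full transformation semigroup T_n; and (b) liminf_{n→∞} d(n) / n^{n−1/2} ≥ c, where d(n) is the smallest number such that every subsemigroup of T_n can be generated by at most d(n) elements. -/
/-!
Fix a point `a` and let `F` be the set of maps `f` that avoid `a` and for which `a` is the only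
preimage of `f a`. If `f ∈ F` and `g` avoids `a`, then `f ∘ g` misses `f a` on top of every point
that `f` misses, so its defect (the number of missed points) exceeds that of `f`. Hence, if `U_k`
is the set of maps in `F` of defect `k` and `I_k` the set of maps avoiding `a` of defect `> k`, all
products of two elements of `I_k ∪ U_k` lie in `I_k`: every `I_k ∪ S` with `S ⊆ U_k` is a
subsemigroup, and any generating set of `I_k ∪ U_k` contains `U_k`.

It remains to find a large layer `U_k`. Counting the maps of `F` that miss a given set of points
gives `|F| ~ e⁻² nⁿ` and shows that the defect on `F` has mean about `e⁻¹ n` and variance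
`σ² n` with `σ² = e⁻¹ - 2e⁻²`. By Chebyshev's inequality two thirds of `F` have their defect in a
window of about `2√3 σ √n` values, so some layer has at least about `e⁻² / (3√3 σ) · n^(n - 1/2)`
elements.
-/

open Filter

/-- `d(n)`: the least `d` such that every subsemigroup of the full transformation
semigroup `T_n` has a generating set of size at most `d`. -/
noncomputable def minGeneratorBound (n : ℕ) : ℕ :=
  sInf {d : ℕ | ∀ T : Subsemigroup (Function.End (Fin n)),
    ∃ A : Finset (Function.End (Fin n)), A.card ≤ d ∧ Subsemigroup.closure ↑A = T}

open Finset Real Topology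

namespace Subsemigroup

variable {M : Type*} [Mul M] {I U : Set M}

def unionOfMulMem (hIU : ∀ x ∈ I ∪ U, ∀ y ∈ I ∪ U, x * y ∈ I) (S : Set M) (hS : S ⊆ U) :
    Subsemigroup M where
  carrier := I ∪ S
  mul_mem' hx hy :=
    Or.inl (hIU _ (Set.union_subset_union_right I hS hx) _ (Set.union_subset_union_right I hS hy))

theorem two_pow_card_le_nat_card [Finite M] {U : Finset M}
    (hIU : ∀ x ∈ I ∪ U, ∀ y ∈ I ∪ U, x * y ∈ I) (hdisj : Disjoint I U) :
    2 ^ #U ≤ Nat.card (Subsemigroup M) := by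
  have hinj : Function.Injective fun S : U.powerset =>
      unionOfMulMem hIU (S : Set M) (by simpa using mem_powerset.1 S.2) := by
    intro S T hST
    have hU : ∀ S : U.powerset, ((I ∪ (S : Set M)) ∩ U) = S := fun S => by
      rw [Set.union_inter_distrib_right, hdisj.inter_eq, Set.empty_union,
        Set.inter_eq_left.2 (by simpa using mem_powerset.1 S.2)]
    have h : (I ∪ (S : Set M)) ∩ U = (I ∪ (T : Set M)) ∩ U :=
      congrArg (fun T : Subsemigroup M => (T : Set M) ∩ U) hST
    rw [hU, hU] at h
    exact Subtype.ext (by exact_mod_cast h)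
  have := Nat.card_le_card_of_injective _ hinj
  rwa [Nat.card_eq_finsetCard, card_powerset] at this

theorem subset_of_coe_closure_eq (hIU : ∀ x ∈ I ∪ U, ∀ y ∈ I ∪ U, x * y ∈ I)
    (hdisj : Disjoint I U) {A : Set M} (hA : (closure A : Set M) = I ∪ U) : U ⊆ A := by
  have hcl : ∀ x ∈ closure A, x ∈ A ∨ x ∈ I := fun x hx => by
    induction hx using closure_induction with
    | mem x hx => exact Or.inl hx
    | mul x y hx hy _ _ =>
      exact Or.inr (hIU x (hA ▸ hx) y (hA ▸ hy))
  intro u hu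
  have hu' : u ∈ closure A := by
    rw [← SetLike.mem_coe, hA]; exact Or.inr hu
  exact (hcl u hu').resolve_right (hdisj.notMem_of_mem_right hu)

end Subsemigroup

instance {α : Type*} [Fintype α] [DecidableEq α] : Fintype (Function.End α) :=
  inferInstanceAs (Fintype (α → α))

theorem card_le_minGeneratorBound {n : ℕ} {I : Set (Function.End (Fin n))}
    {U : Finset (Function.End (Fin n))} (hIU : ∀ x ∈ I ∪ U, ∀ y ∈ I ∪ U, x * y ∈ I)
    (hdisj : Disjoint I U) : #U ≤ minGeneratorBound n := by
  classical
  have hne : {d : ℕ | ∀ T : Subsemigroup (Function.End (Fin n)),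
      ∃ A : Finset (Function.End (Fin n)), #A ≤ d ∧ Subsemigroup.closure ↑A = T}.Nonempty :=
    ⟨Fintype.card (Function.End (Fin n)), fun T => ⟨(T : Set _).toFinset, card_le_univ _, by simp⟩⟩
  obtain ⟨A, hA, hcl⟩ := Nat.sInf_mem hne (Subsemigroup.unionOfMulMem hIU U subset_rfl)
  refine le_trans (card_le_card ?_) hA
  exact_mod_cast Subsemigroup.subset_of_coe_closure_eq hIU hdisj (by rw [hcl]; rfl)

theorem card_le_two_mul_add_one_of_abs_sub_le {J : Finset ℕ} (hJ : J.Nonempty) {μ τ : ℝ}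
    (h : ∀ k ∈ J, |(k : ℝ) - μ| ≤ τ) : (#J : ℝ) ≤ 2 * τ + 1 := by
  have hsub : J ⊆ Icc (J.min' hJ) (J.max' hJ) := fun k hk =>
    mem_Icc.2 ⟨J.min'_le k hk, J.le_max' k hk⟩
  have hlo := abs_le.1 (h _ (J.min'_mem hJ))
  have hhi := abs_le.1 (h _ (J.max'_mem hJ))
  have hle : J.min' hJ ≤ J.max' hJ := J.min'_le _ (J.max'_mem hJ)
  calc (#J : ℝ) ≤ #(Icc (J.min' hJ) (J.max' hJ)) := by exact_mod_cast card_le_card hsub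
    _ = (J.max' hJ : ℝ) + 1 - J.min' hJ := by
      rw [Nat.card_Icc, Nat.cast_sub (by omega)]; push_cast; ring
    _ ≤ 2 * τ + 1 := by linarith

theorem two_div_three_mul_card_le_card_filter_abs_sub_le {ι : Type*} (s : Finset ι) (g : ι → ℝ)
    {μ τ : ℝ} (hτ : 0 < τ) (hs : 3 * ∑ x ∈ s, (g x - μ) ^ 2 ≤ τ ^ 2 * #s) :
    2 / 3 * (#s : ℝ) ≤ #{x ∈ s | |g x - μ| ≤ τ} := by
  have hfar : (#{x ∈ s | ¬ |g x - μ| ≤ τ} : ℝ) * τ ^ 2 ≤ τ ^ 2 * #s / 3 :=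
    calc (#{x ∈ s | ¬ |g x - μ| ≤ τ} : ℝ) * τ ^ 2
        ≤ ∑ x ∈ s with ¬ |g x - μ| ≤ τ, (g x - μ) ^ 2 := by
          rw [← nsmul_eq_mul]
          refine card_nsmul_le_sum _ _ _ fun x hx => ?_
          rw [← sq_abs (g x - μ)]
          exact pow_le_pow_left₀ hτ.le (not_le.1 (mem_filter.1 hx).2).le 2
      _ ≤ ∑ x ∈ s, (g x - μ) ^ 2 :=
          sum_le_sum_of_subset_of_nonneg (filter_subset _ _) fun _ _ _ => sq_nonneg _
      _ ≤ τ ^ 2 * #s / 3 := by linarith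
  have hsplit : (#{x ∈ s | |g x - μ| ≤ τ} : ℝ) + #{x ∈ s | ¬ |g x - μ| ≤ τ} = #s := by
    exact_mod_cast card_filter_add_card_filter_not _
  nlinarith [pow_pos hτ 2]

theorem exists_le_card_fiber_of_sum_sq_le {ι : Type*} (s : Finset ι) (g : ι → ℕ) {μ τ : ℝ}
    (hτ : 0 < τ) (hs : 3 * ∑ x ∈ s, ((g x : ℝ) - μ) ^ 2 ≤ τ ^ 2 * #s) :
    ∃ k, 2 / 3 * #s / (2 * τ + 1) ≤ #{x ∈ s | g x = k} := by
  set near := {x ∈ s | |(g x : ℝ) - μ| ≤ τ}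
  have hnear : 2 / 3 * (#s : ℝ) ≤ #near :=
    two_div_three_mul_card_le_card_filter_abs_sub_le s (fun x => (g x : ℝ)) hτ hs
  rcases near.eq_empty_or_nonempty with hempty | hne
  · rw [hempty, card_empty, Nat.cast_zero] at hnear
    exact ⟨0, (div_nonpos_of_nonpos_of_nonneg hnear (by positivity)).trans (Nat.cast_nonneg _)⟩
  have hwin : (#(near.image g) : ℝ) ≤ 2 * τ + 1 :=
    card_le_two_mul_add_one_of_abs_sub_le (hne.image g) fun k hk => by
      obtain ⟨x, hx, rfl⟩ := mem_image.1 hk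
      exact (mem_filter.1 hx).2
  obtain ⟨k, -, hk⟩ := exists_le_card_fiber_of_nsmul_le_card_of_maps_to
    (fun x hx => mem_image_of_mem g hx) (hne.image g) (b := 2 / 3 * #s / (2 * τ + 1)) (by
      rw [nsmul_eq_mul, mul_div_assoc']
      refine (div_le_iff₀ (by positivity)).2 ?_
      calc (#(near.image g) : ℝ) * (2 / 3 * #s) ≤ (2 * τ + 1) * (2 / 3 * #s) := by gcongr
        _ ≤ #near * (2 * τ + 1) := by rw [mul_comm]; gcongr)
  refine ⟨k, hk.trans ?_⟩
  exact_mod_cast card_le_card (filter_subset_filter _ (filter_subset _ _))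

noncomputable def injAtCount (n k : ℕ) : ℝ := ((n : ℝ) - k) * ((n : ℝ) - k - 1) ^ (n - 1)

theorem sum_comp_card_insert {α : Type*} [Fintype α] [DecidableEq α] (φ : ℕ → ℝ) (s : Finset α) :
    ∑ q, φ #(insert q s) = #s * φ #s + (Fintype.card α - #s) * φ (#s + 1) := by
  have hin : ∑ q ∈ s, φ #(insert q s) = ∑ q ∈ s, φ #s :=
    sum_congr rfl fun q hq => by rw [insert_eq_of_mem hq]
  have hout : ∑ q ∈ sᶜ, φ #(insert q s) = ∑ q ∈ sᶜ, φ (#s + 1) :=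
    sum_congr rfl fun q hq => by rw [card_insert_of_notMem (mem_compl.1 hq)]
  rw [← sum_add_sum_compl s, hin, hout, sum_const, sum_const, card_compl, nsmul_eq_mul,
    nsmul_eq_mul, Nat.cast_sub (card_le_univ s)]

namespace Function

variable {α : Type*} [Fintype α] [DecidableEq α]

def missing (f : α → α) : Finset α := {p | ∀ x, f x ≠ p}

def defect (f : α → α) : ℕ := #(missing f)

theorem mem_missing {f : α → α} {p : α} : p ∈ missing f ↔ ∀ x, f x ≠ p := by
  simp [missing]

theorem missing_subset_missing_comp (f g : α → α) : missing f ⊆ missing (f ∘ g) :=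
  fun _ hp => mem_missing.2 fun x => mem_missing.1 hp (g x)

theorem defect_lt_defect_comp {a : α} {f g : α → α} (hf : ∀ x, f x = f a → x = a)
    (hg : ∀ x, g x ≠ a) : defect f < defect (f ∘ g) := by
  refine card_lt_card ((ssubset_iff_of_subset (missing_subset_missing_comp f g)).2 ⟨f a, ?_, ?_⟩)
  · exact mem_missing.2 fun x hx => hg x (hf _ hx)
  · exact fun h => mem_missing.1 h a rfl

def injAtMaps (a : α) (B : Finset α) : Finset (α → α) :=
  {f | (∀ x, f x ∈ B) ∧ ∀ x, f x = f a → x = a}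

theorem mem_injAtMaps {a : α} {B : Finset α} {f : α → α} :
    f ∈ injAtMaps a B ↔ (∀ x, f x ∈ B) ∧ ∀ x, f x = f a → x = a := by
  simp [injAtMaps]

def highDefect (a : α) (k : ℕ) : Set (α → α) := {h | (∀ x, h x ≠ a) ∧ k < defect h}

def defectLayer (a : α) (k : ℕ) : Finset (α → α) := {f ∈ injAtMaps a {a}ᶜ | defect f = k}

theorem mul_mem_highDefect {a : α} {k : ℕ} {f g : Function.End α}
    (hf : f ∈ highDefect a k ∪ ↑(defectLayer a k))
    (hg : g ∈ highDefect a k ∪ ↑(defectLayer a k)) :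
    f * g ∈ highDefect a k := by
  have avoids : ∀ h ∈ highDefect a k ∪ ↑(defectLayer a k), ∀ x, h x ≠ a := by
    rintro h (hh | hh) x
    · exact hh.1 x
    · simpa using (mem_injAtMaps.1 (mem_filter.1 hh).1).1 x
  refine ⟨fun x => avoids f hf (g x), ?_⟩
  rcases hf with hf | hf
  · exact hf.2.trans_le (card_le_card (missing_subset_missing_comp f g))
  · obtain ⟨hfF, rfl⟩ := mem_filter.1 hf
    exact defect_lt_defect_comp (mem_injAtMaps.1 hfF).2 (avoids g hg)

theorem disjoint_highDefect_defectLayer (a : α) (k : ℕ) :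
    Disjoint (highDefect a k) ↑(defectLayer a k) :=
  Set.disjoint_left.2 fun _ hI hU => hI.2.ne' (mem_filter.1 hU).2

theorem card_injAtMaps (a : α) (B : Finset α) :
    (#(injAtMaps a B) : ℝ) = #B * (#B - 1) ^ (Fintype.card α - 1) := by
  have hfiber : ∀ b ∈ B, {f ∈ injAtMaps a B | f a = b} =
      Fintype.piFinset fun x => if x = a then {b} else B.erase b := by
    intro b hb
    ext f
    simp only [mem_filter, mem_injAtMaps, Fintype.mem_piFinset]
    constructor
    · rintro ⟨⟨hB, hinj⟩, rfl⟩ x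
      split_ifs with hx
      · simp [hx]
      · exact mem_erase.2 ⟨fun h => hx (hinj x h), hB x⟩
    · intro h
      have hfa : f a = b := by simpa using h a
      have hne : ∀ x, x ≠ a → f x ∈ B.erase b := fun x hx => by simpa [hx] using h x
      refine ⟨⟨fun x => ?_, fun x hx => ?_⟩, hfa⟩
      · by_cases hxa : x = a
        · rw [hxa, hfa]; exact hb
        · exact mem_of_mem_erase (hne x hxa)
      · by_contra hxa
        exact (ne_of_mem_erase (hne x hxa)) (hx.trans hfa)
  have hcard : ∀ b ∈ B, (#{f ∈ injAtMaps a B | f a = b} : ℝ) = (#B - 1) ^ (Fintype.card α - 1) := by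
    intro b hb
    rw [hfiber b hb, Fintype.card_piFinset, Nat.cast_prod, ← mul_prod_erase univ _ (mem_univ a),
      prod_congr rfl fun x hx => by rw [if_neg (ne_of_mem_erase hx), cast_card_erase_of_mem hb]]
    simp
  rw [card_eq_sum_card_fiberwise fun f hf => (mem_injAtMaps.1 hf).1 a, Nat.cast_sum,
    sum_congr rfl hcard, sum_const, nsmul_eq_mul]

theorem card_filter_subset_missing {a : α} {s : Finset α} (ha : a ∈ s) :
    (#{f ∈ injAtMaps a {a}ᶜ | s ⊆ missing f} : ℝ) = injAtCount (Fintype.card α) #s := by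
  have : {f ∈ injAtMaps a {a}ᶜ | s ⊆ missing f} = injAtMaps a sᶜ := by
    ext f
    simp only [mem_filter, mem_injAtMaps, subset_iff, mem_missing, mem_compl, mem_singleton]
    constructor
    · rintro ⟨⟨-, hinj⟩, hs⟩
      exact ⟨fun x hx => hs hx x rfl, hinj⟩
    · rintro ⟨hs, hinj⟩
      exact ⟨⟨fun x hx => hs x (hx ▸ ha), hinj⟩, fun p hp x hx => hs x (hx ▸ hp)⟩
  rw [this, card_injAtMaps, card_compl, Nat.cast_sub (card_le_univ s), injAtCount]

theorem card_injAtMaps_compl_singleton (a : α) :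
    (#(injAtMaps a {a}ᶜ) : ℝ) = injAtCount (Fintype.card α) 1 := by
  rw [← card_singleton a, ← card_filter_subset_missing (mem_singleton_self a), filter_true_of_mem]
  intro f hf
  exact singleton_subset_iff.2 (mem_missing.2 fun x => by simpa using (mem_injAtMaps.1 hf).1 x)

theorem cast_defect_eq_sum {a : α} {f : α → α} (hf : f ∈ injAtMaps a {a}ᶜ) :
    (defect f : ℝ) = ∑ p, if insert p {a} ⊆ missing f then 1 else 0 := by
  have ha : a ∈ missing f := mem_missing.2 fun x => by simpa using (mem_injAtMaps.1 hf).1 x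
  rw [defect, ← natCast_card_filter]
  congr 2
  ext p
  simp only [mem_filter, mem_univ, true_and, insert_subset_iff, singleton_subset_iff, ha, and_true]

theorem cast_defect_sq_eq_sum {a : α} {f : α → α} (hf : f ∈ injAtMaps a {a}ᶜ) :
    (defect f : ℝ) ^ 2 = ∑ p, ∑ q, if insert q (insert p {a}) ⊆ missing f then 1 else 0 := by
  rw [sq, cast_defect_eq_sum hf, sum_mul_sum]
  refine sum_congr rfl fun p _ => sum_congr rfl fun q _ => ?_
  rw [ite_zero_mul_ite_zero, mul_one]
  congr 1
  simp only [insert_subset_iff, singleton_subset_iff, eq_iff_iff]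
  tauto

theorem sum_defect (a : α) :
    ∑ f ∈ injAtMaps a {a}ᶜ, (defect f : ℝ) =
      injAtCount (Fintype.card α) 1 + (Fintype.card α - 1) * injAtCount (Fintype.card α) 2 := by
  rw [sum_congr rfl fun f hf => cast_defect_eq_sum hf, sum_comm]
  simp_rw [← natCast_card_filter]
  rw [sum_congr rfl fun p _ => card_filter_subset_missing (mem_insert_of_mem (mem_singleton_self a)),
    sum_comp_card_insert]
  simp

theorem sum_defect_sq (a : α) :
    ∑ f ∈ injAtMaps a {a}ᶜ, (defect f : ℝ) ^ 2 =
      injAtCount (Fintype.card α) 1 + 3 * (Fintype.card α - 1) * injAtCount (Fintype.card α) 2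
        + (Fintype.card α - 1) * (Fintype.card α - 2) * injAtCount (Fintype.card α) 3 := by
  set n := Fintype.card α
  rw [sum_congr rfl fun f hf => cast_defect_sq_eq_sum hf, sum_comm]
  simp_rw [sum_comm (s := injAtMaps a {a}ᶜ), ← natCast_card_filter]
  rw [sum_congr rfl fun p _ => sum_congr rfl fun q _ =>
    card_filter_subset_missing (mem_insert_of_mem (mem_insert_of_mem (mem_singleton_self a)))]
  rw [sum_congr rfl fun p _ => sum_comp_card_insert (injAtCount n) (insert p {a})]
  rw [sum_comp_card_insert (fun k => k * injAtCount n k + (n - k) * injAtCount n (k + 1))]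
  simp only [card_singleton, Nat.cast_one, one_mul, Nat.reduceAdd, Nat.cast_ofNat]
  ring

end Function

noncomputable def defectRatio (n : ℕ) : ℝ := (((n : ℝ) - 3) / ((n : ℝ) - 2)) ^ (n - 1)

noncomputable def defectMean (n : ℕ) : ℝ := 1 + ((n : ℝ) - 2) * defectRatio n

-- The variance of the defect is a difference of two terms of order `n²` whose leading parts
-- cancel; `varianceCorrection n → -1` is what survives.
noncomputable def varianceCorrection (n : ℕ) : ℝ :=
  ((n : ℝ) - 3) * ((1 - 1 / ((n : ℝ) - 3) ^ 2) ^ (n - 1) - 1)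

noncomputable def defectVarianceRate (n : ℕ) : ℝ :=
  ((n : ℝ) - 2) / n * (defectRatio n + defectRatio n ^ 2 * (varianceCorrection n - 1))

noncomputable def largeLayerBound (n : ℕ) : ℝ :=
  2 / 3 * injAtCount n 1 / (2 * √(3 * n * defectVarianceRate n + 1) + 1)

namespace Function

variable {α : Type*} [Fintype α] [DecidableEq α]

theorem sum_sq_defect_sub_defectMean (a : α) (hn : 5 ≤ Fintype.card α) :
    ∑ f ∈ injAtMaps a {a}ᶜ, ((defect f : ℝ) - defectMean (Fintype.card α)) ^ 2 =
      Fintype.card α * injAtCount (Fintype.card α) 1 * defectVarianceRate (Fintype.card α) := by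
  set n := Fintype.card α
  have hx : (5 : ℝ) ≤ n := by exact_mod_cast hn
  have h2 : (n : ℝ) - 2 ≠ 0 := by linarith
  have h3 : (n : ℝ) - 3 ≠ 0 := by linarith
  have hρ : (1 - 1 / ((n : ℝ) - 3) ^ 2) ^ (n - 1) =
      ((n : ℝ) - 4) ^ (n - 1) * ((n : ℝ) - 2) ^ (n - 1) / (((n : ℝ) - 3) ^ (n - 1)) ^ 2 := by
    rw [show 1 - 1 / ((n : ℝ) - 3) ^ 2 = ((n : ℝ) - 4) * ((n : ℝ) - 2) / ((n : ℝ) - 3) ^ 2 by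
      field_simp; ring, div_pow, mul_pow, ← pow_mul, ← pow_mul, mul_comm 2]
  simp_rw [sub_sq, sum_add_distrib, sum_sub_distrib, ← sum_mul, ← mul_sum, sum_const,
    nsmul_eq_mul, sum_defect, sum_defect_sq, card_injAtMaps_compl_singleton]
  simp only [defectMean, defectVarianceRate, varianceCorrection, defectRatio, injAtCount, hρ,
    div_pow]
  push_cast
  have := pow_ne_zero (n - 1) h2
  have := pow_ne_zero (n - 1) h3
  have : (n : ℝ) ≠ 0 := by linarith
  field_simp
  ring

theorem exists_largeLayerBound_le_card (a : α) (hn : 5 ≤ Fintype.card α) :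
    ∃ k, largeLayerBound (Fintype.card α) ≤ #(defectLayer a k) := by
  set n := Fintype.card α
  have hx : (5 : ℝ) ≤ n := by exact_mod_cast hn
  have hN : 0 < injAtCount n 1 := by
    unfold injAtCount
    have : (0 : ℝ) < n - (1 : ℕ) - 1 := by push_cast; linarith
    have : (0 : ℝ) < n - (1 : ℕ) := by push_cast; linarith
    positivity
  have hvar := sum_sq_defect_sub_defectMean a hn
  have hv : 0 ≤ n * defectVarianceRate n := by
    have : 0 ≤ n * injAtCount n 1 * defectVarianceRate n :=
      hvar ▸ sum_nonneg fun _ _ => sq_nonneg _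
    nlinarith
  obtain ⟨k, hk⟩ := exists_le_card_fiber_of_sum_sq_le (injAtMaps a {a}ᶜ) defect
    (μ := defectMean n) (τ := √(3 * n * defectVarianceRate n + 1)) (sqrt_pos.2 (by linarith)) (by
      rw [sq_sqrt (by linarith), hvar, card_injAtMaps_compl_singleton]
      nlinarith)
  rw [card_injAtMaps_compl_singleton] at hk
  exact ⟨k, hk⟩

end Function

theorem tendsto_add_div_add (a b : ℝ) :
    Tendsto (fun n : ℕ => ((n : ℝ) + a) / ((n : ℝ) + b)) atTop (𝓝 1) := by
  simpa [add_comm] using tendsto_add_mul_div_add_mul_atTop_nhds a b 1 one_ne_zero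

theorem tendsto_add_div_add_pow_sub_one (a b : ℝ) :
    Tendsto (fun n : ℕ => (((n : ℝ) + a) / ((n : ℝ) + b)) ^ (n - 1)) atTop (𝓝 (exp (a - b))) := by
  rw [← tendsto_add_atTop_iff_nat 1]
  have h := (tendsto_one_add_div_pow_exp (1 + a)).div (tendsto_one_add_div_pow_exp (1 + b))
    (exp_pos _).ne'
  rw [← exp_sub, show 1 + a - (1 + b) = a - b by ring] at h
  refine h.congr' ?_
  filter_upwards [eventually_ne_atTop 0] with m hm
  have hm' : (m : ℝ) ≠ 0 := Nat.cast_ne_zero.2 hm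
  rw [Pi.div_apply, ← div_pow, one_add_div hm', one_add_div hm', div_div_div_cancel_right₀ hm',
    Nat.add_sub_cancel]
  push_cast
  ring_nf

theorem tendsto_defectRatio : Tendsto defectRatio atTop (𝓝 (exp (-1))) := by
  have h := tendsto_add_div_add_pow_sub_one (-3) (-2)
  rw [show (-3 : ℝ) - -2 = -1 by ring] at h
  exact h.congr fun n => by rw [defectRatio]; ring_nf

theorem tendsto_injAtCount_one_div_pow :
    Tendsto (fun n : ℕ => injAtCount n 1 / (n : ℝ) ^ n) atTop (𝓝 (exp (-2))) := by
  have h := (tendsto_add_div_add (-1) 0).mul (tendsto_add_div_add_pow_sub_one (-2) 0)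
  rw [one_mul, show (-2 : ℝ) - 0 = -2 by ring] at h
  refine h.congr' ?_
  filter_upwards [eventually_ne_atTop 0] with n hn
  obtain ⟨m, rfl⟩ := Nat.exists_eq_succ_of_ne_zero hn
  have hm : (m : ℝ) + 1 ≠ 0 := by positivity
  rw [injAtCount, Nat.succ_sub_one, pow_succ', div_pow]
  push_cast
  field_simp
  ring

theorem Filter.Tendsto.mul_exp_sub_one {ι : Type*} {l : Filter ι} {c w : ι → ℝ} {L : ℝ}
    (hcw : Tendsto (fun i => c i * w i) l (𝓝 L)) (hc : Tendsto c l atTop)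
    (hw : ∀ᶠ i in l, w i ≠ 0) : Tendsto (fun i => c i * (Real.exp (w i) - 1)) l (𝓝 L) := by
  have hw0 : Tendsto w l (𝓝[≠] 0) := by
    refine tendsto_nhdsWithin_iff.2 ⟨?_, hw⟩
    have h := hcw.mul (tendsto_inv_atTop_zero.comp hc)
    rw [mul_zero] at h
    refine h.congr' ?_
    filter_upwards [hc.eventually_ne_atTop 0] with i hi
    simp only [Function.comp_apply]
    field_simp
  have h := hcw.mul ((hasDerivAt_exp 0).tendsto_slope_zero.comp hw0)
  rw [exp_zero, mul_one] at h
  refine h.congr' ?_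
  filter_upwards [hw] with i hi
  simp only [Function.comp_apply, zero_add, smul_eq_mul]
  field_simp

theorem tendsto_varianceCorrection : Tendsto varianceCorrection atTop (𝓝 (-1)) := by
  set w : ℕ → ℝ := fun n => ((n - 1 : ℕ) : ℝ) * log (1 - 1 / ((n : ℝ) - 3) ^ 2) with hw_def
  have hshift : Tendsto (fun n : ℕ => (n : ℝ) - 3) atTop atTop := by
    simpa only [sub_eq_add_neg] using
      tendsto_atTop_add_const_right _ (-3) tendsto_natCast_atTop_atTop
  have hw : Tendsto (fun n : ℕ => ((n : ℝ) - 3) * w n) atTop (𝓝 (-1)) := by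
    have h := (tendsto_add_div_add (-1) (-3)).mul
      ((tendsto_mul_log_one_add_div_atTop (-1)).comp ((tendsto_pow_atTop two_ne_zero).comp hshift))
    rw [one_mul] at h
    refine h.congr' ?_
    filter_upwards [eventually_ge_atTop 4] with n hn
    have h3 : (n : ℝ) - 3 ≠ 0 := by
      have : (4 : ℝ) ≤ n := by exact_mod_cast hn
      linarith
    simp only [Function.comp_apply, hw_def, Nat.cast_sub (by omega : 1 ≤ n), Nat.cast_one,
      neg_div, ← sub_eq_add_neg]
    field_simp
  have hρ : ∀ᶠ n : ℕ in atTop,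
      0 < 1 - 1 / ((n : ℝ) - 3) ^ 2 ∧ 1 - 1 / ((n : ℝ) - 3) ^ 2 < 1 := by
    filter_upwards [eventually_ge_atTop 5] with n hn
    have hx : (5 : ℝ) ≤ n := by exact_mod_cast hn
    have hsq : 1 < ((n : ℝ) - 3) ^ 2 := by nlinarith
    exact ⟨by rw [sub_pos, div_lt_one (by linarith)]; exact hsq,
      sub_lt_self _ (one_div_pos.2 (by linarith))⟩
  have hw_ne : ∀ᶠ n in atTop, w n ≠ 0 := by
    filter_upwards [eventually_ge_atTop 2, hρ] with n hn hρn
    exact mul_ne_zero (Nat.cast_ne_zero.2 (by omega)) (log_neg hρn.1 hρn.2).ne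
  refine (hw.mul_exp_sub_one hshift hw_ne).congr' ?_
  filter_upwards [hρ] with n hρn
  rw [varianceCorrection, hw_def, exp_nat_mul, exp_log hρn.1]

theorem tendsto_defectVarianceRate :
    Tendsto defectVarianceRate atTop (𝓝 (exp (-1) - 2 * exp (-2))) := by
  have h := (tendsto_add_div_add (-2) 0).mul
    (tendsto_defectRatio.add ((tendsto_defectRatio.pow 2).mul (tendsto_varianceCorrection.sub_const 1)))
  rw [show (1 : ℝ) * (exp (-1) + exp (-1) ^ 2 * (-1 - 1)) = exp (-1) - 2 * exp (-2) by
    rw [← exp_nat_mul]; norm_num; ring] at h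
  exact h.congr fun n => by rw [defectVarianceRate]; ring_nf

theorem tendsto_largeLayerBound_div_rpow :
    Tendsto (fun n : ℕ => largeLayerBound n / (n : ℝ) ^ ((n : ℝ) - 1 / 2)) atTop
      (𝓝 (exp (-2) / (3 * √3 * √(exp (-1) - 2 * exp (-2))))) := by
  set σ2 := exp (-1) - 2 * exp (-2)
  have hσ : 0 < σ2 := by
    have : exp (-1) = exp (-2) * exp 1 := by rw [← exp_add]; norm_num
    have := exp_one_gt_d9
    have := exp_pos (-2)
    simp only [σ2]
    nlinarith
  have hden : Tendsto (fun n : ℕ => 2 * √(3 * defectVarianceRate n + 1 / n) + √(1 / n)) atTop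
      (𝓝 (2 * √(3 * σ2))) := by
    have h := (((tendsto_defectVarianceRate.const_mul 3).add
      tendsto_one_div_atTop_nhds_zero_nat).sqrt.const_mul 2).add
        tendsto_one_div_atTop_nhds_zero_nat.sqrt
    simpa using h
  have h := (tendsto_injAtCount_one_div_pow.const_mul (2 / 3)).div hden
    (mul_pos two_pos (sqrt_pos.2 (mul_pos three_pos hσ))).ne'
  rw [show 2 / 3 * exp (-2) / (2 * √(3 * σ2)) = exp (-2) / (3 * √3 * √σ2) by
    rw [sqrt_mul (by norm_num)]; field_simp] at h
  refine h.congr' ?_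
  filter_upwards [eventually_gt_atTop 0] with n hn
  have hx : (0 : ℝ) < n := by exact_mod_cast hn
  rw [Pi.div_apply, largeLayerBound, rpow_sub hx, rpow_natCast, ← sqrt_eq_rpow,
    show 3 * defectVarianceRate n + 1 / n = (3 * n * defectVarianceRate n + 1) / n by
      field_simp, sqrt_div' _ hx.le, sqrt_div' _ hx.le, sqrt_one]
  have := sqrt_pos.2 hx
  field_simp

/-- Let `c = e⁻² / (3·√3·√(e⁻¹ − 2e⁻²))`.  Then
(a) `liminf_{n→∞} log₂(N(n)) / n^(n−1/2) ≥ c`, where `N(n)` is the number of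
subsemigroups (subsets closed under composition) of `T_n`; and
(b) `liminf_{n→∞} d(n) / n^(n−1/2) ≥ c`, where `d(n)` is the smallest number such that
every subsemigroup of `T_n` can be generated by at most `d(n)` elements.
(The liminf inequalities are expressed in the usual ε-form.) -/
theorem subsemigroup_count_and_rank_lower_bounds :
    (∀ ε : ℝ, 0 < ε → ∀ᶠ n : ℕ in atTop,
      Real.exp (-2) / (3 * Real.sqrt 3 * Real.sqrt (Real.exp (-1) - 2 * Real.exp (-2))) - ε ≤
        Real.logb 2 (Nat.card (Subsemigroup (Function.End (Fin n)))) /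
          (n : ℝ) ^ ((n : ℝ) - 1 / 2)) ∧
    (∀ ε : ℝ, 0 < ε → ∀ᶠ n : ℕ in atTop,
      Real.exp (-2) / (3 * Real.sqrt 3 * Real.sqrt (Real.exp (-1) - 2 * Real.exp (-2))) - ε ≤
        (minGeneratorBound n : ℝ) / (n : ℝ) ^ ((n : ℝ) - 1 / 2)) := by
  have hlayer : ∀ᶠ n : ℕ in atTop, ∃ (I : Set (Function.End (Fin n)))
      (U : Finset (Function.End (Fin n))), (∀ x ∈ I ∪ U, ∀ y ∈ I ∪ U, x * y ∈ I) ∧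
        Disjoint I U ∧ largeLayerBound n ≤ #U := by
    filter_upwards [eventually_ge_atTop 5] with n hn
    obtain ⟨k, hk⟩ := Function.exists_largeLayerBound_le_card (⟨0, by omega⟩ : Fin n)
      (by rwa [Fintype.card_fin])
    rw [Fintype.card_fin] at hk
    exact ⟨_, _, fun x hx y hy => Function.mul_mem_highDefect hx hy,
      Function.disjoint_highDefect_defectLayer _ k, hk⟩
  have hlim (ε : ℝ) (hε : 0 < ε) := tendsto_largeLayerBound_div_rpow.eventually
    (eventually_ge_nhds (sub_lt_self _ hε))
  refine ⟨fun ε hε => ?_, fun ε hε => ?_⟩ <;>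
    filter_upwards [hlim ε hε, hlayer] with n hn ⟨I, U, hIU, hdisj, hU⟩ <;>
    refine hn.trans (div_le_div_of_nonneg_right (hU.trans ?_) (by positivity))
  · have hpow : (2 : ℝ) ^ (#U : ℝ) ≤ Nat.card (Subsemigroup (Function.End (Fin n))) := by
      rw [rpow_natCast]
      exact_mod_cast Subsemigroup.two_pow_card_le_nat_card hIU hdisj
    exact (le_logb_iff_rpow_le one_lt_two ((rpow_pos_of_pos two_pos _).trans_le hpow)).2 hpow
  · exact_mod_cast card_le_minGeneratorBound hIU hdisj
end
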